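/- Let m ≥ 2 be an integer and let H_m be the subgroup of GL₂(ℝ) generated by the image of SL₂(ℤ) and the diagonal matrix diag(m, 1). Every element of H_m has positive determinant, so H_m acts on the complex upper half-plane ℍ by fractional linear transformations. For every τ ∈ ℍ, the orbit H_m · τ = { g·τ : g ∈ H_m } is dense in ℍ. -/

import Mathlib

/-!
Conjugating the integral transvections by powers of `diag(m, 1)` puts every upper and lower
transvection with coefficient in `ℤ[1/m]` into `H_m`. These coefficients are dense in `ℝ`, and
upper and lower transvections generate `SL₂(ℝ)`, so `H_m ∩ SL₂(ℝ)` is dense in `SL₂(ℝ)`. Since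
`SL₂(ℝ)` acts continuously and transitively on `ℍ`, the orbits of a dense subgroup are dense.
-/

open Matrix

set_option synthInstance.maxHeartbeats 1000000

/-- The diagonal matrix `diag(m, 1)` as an element of `GL₂(ℝ)`. -/
noncomputable def diagm (m : ℕ) (hm : 2 ≤ m) : GL (Fin 2) ℝ :=
  Matrix.GeneralLinearGroup.mkOfDetNeZero (Matrix.diagonal ![(m : ℝ), 1])
    (by
      have hm0 : (m : ℝ) ≠ 0 := by positivity
      simp [Matrix.det_diagonal, Fin.prod_univ_two, hm0])

/-- `H_m`: the subgroup of `GL₂(ℝ)` generated by the image of `SL₂(ℤ)` and the diagonal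
matrix `diag(m, 1)`. -/
noncomputable def Hm (m : ℕ) (hm : 2 ≤ m) : Subgroup (GL (Fin 2) ℝ) :=
  Subgroup.closure
    (Set.range
        (fun A : SpecialLinearGroup (Fin 2) ℤ =>
          SpecialLinearGroup.toGL (SpecialLinearGroup.map (Int.castRingHom ℝ) A)) ∪
      {diagm m hm})

open scoped MatrixGroups

theorem AddSubgroup.dense_of_forall_div_mem {K : Type*} [Field K] [LinearOrder K]
    [IsStrictOrderedRing K] [Archimedean K] [TopologicalSpace K] [OrderTopology K]
    (S : AddSubgroup K) {m x : K} (hm : 1 < m) (hx : 0 < x) (hxS : x ∈ S)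
    (hS : ∀ y ∈ S, y / m ∈ S) : Dense (S : Set K) := by
  have hpow (k : ℕ) : x / m ^ k ∈ S := by
    induction k with
    | zero => simpa using hxS
    | succ k ih => simpa [pow_succ, div_div] using hS _ ih
  refine S.dense_of_not_isolated_zero fun ε hε => ?_
  obtain ⟨k, hk⟩ := exists_pow_lt_of_lt_one (div_pos hε hx) (inv_lt_one_of_one_lt₀ hm)
  refine ⟨x / m ^ k, hpow k, by positivity, ?_⟩
  rw [inv_pow, lt_div_iff₀ hx] at hk
  simpa [div_eq_inv_mul] using hk

theorem dense_orbit_of_dense_subgroup {G X : Type*} [Group G] [TopologicalSpace G]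
    [TopologicalSpace X] [MulAction G X] [ContinuousSMul G X] [MulAction.IsPretransitive G X]
    {Γ : Subgroup G} (hΓ : Dense (Γ : Set G)) (x : X) : Dense (MulAction.orbit Γ x) := by
  have horbit : MulAction.orbit Γ x = (· • x) '' (Γ : Set G) := by
    ext y
    simp [MulAction.mem_orbit_iff]
  rw [horbit]
  exact (MulAction.surjective_smul G x).denseRange.dense_image (by fun_prop) hΓ

namespace Matrix.SpecialLinearGroup

section Transvection

variable {ι R : Type*} [Fintype ι] [DecidableEq ι] [CommRing R]

lemma map_transvection {S : Type*} [CommRing S] (f : R →+* S) {i j : ι} (hij : i ≠ j) (b : R) :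
    map f (transvection hij b) = transvection hij (f b) := by
  ext a c
  simp only [map_apply_coe, RingHom.mapMatrix_apply, Matrix.map_apply, transvection_coe,
    add_apply, one_apply, single_apply]
  split_ifs <;> simp

def transvectionCoeffs (Γ : Subgroup (SpecialLinearGroup ι R)) {i j : ι} (hij : i ≠ j) :
    AddSubgroup R where
  carrier := {b | transvection hij b ∈ Γ}
  zero_mem' := by simp [Γ.one_mem]
  add_mem' ha hb := by simpa [transvection_add] using Γ.mul_mem ha hb
  neg_mem' ha := by simpa [transvection_inv] using Γ.inv_mem ha

variable [TopologicalSpace R] [IsTopologicalRing R]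

theorem continuous_transvection {i j : ι} (hij : i ≠ j) :
    Continuous (transvection hij : R → SpecialLinearGroup ι R) := by
  refine (continuous_const.add (continuous_pi fun a => continuous_pi fun c => ?_)).subtype_mk _
  simp only [single_apply]
  split_ifs
  exacts [continuous_id, continuous_const]

theorem transvection_mem_topologicalClosure {Γ : Subgroup (SpecialLinearGroup ι R)} {i j : ι}
    (hij : i ≠ j) (hΓ : Dense (transvectionCoeffs Γ hij : Set R)) (b : R) :
    transvection hij b ∈ Γ.topologicalClosure :=
  closure_mono (Set.image_preimage_subset _ _)
    ((continuous_transvection hij).range_subset_closure_image_dense hΓ ⟨b, rfl⟩)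

end Transvection

section FinTwo

variable {F : Type*} [Field F]

local notation "U" => transvection (zero_ne_one : (0 : Fin 2) ≠ 1)
local notation "L" => transvection (one_ne_zero : (1 : Fin 2) ≠ 0)

theorem eq_transvection_mul_transvection_mul_transvection (g : SL(2, F)) (hg : g 1 0 ≠ 0) :
    g = U ((g 0 0 - 1) / g 1 0) * L (g 1 0) * U ((g 1 1 - 1) / g 1 0) := by
  have h01 : g 0 0 * ((g 1 1 - 1) / g 1 0) + (g 0 0 - 1) / g 1 0 = g 0 1 := by
    have hdet : g 0 0 * g 1 1 - g 0 1 * g 1 0 = 1 := by rw [← det_fin_two]; exact g.det_coe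
    field_simp
    linear_combination hdet
  ext i j
  fin_cases i <;> fin_cases j <;>
    simp [transvection_coe, mul_apply, Fin.sum_univ_two, single, mul_div_cancel₀, hg, h01]

theorem closure_range_transvection_union_range_transvection :
    Subgroup.closure (Set.range (U : F → SL(2, F)) ∪ Set.range L) = ⊤ := by
  set Γ := Subgroup.closure (Set.range (U : F → SL(2, F)) ∪ Set.range L)
  have hU (b : F) : U b ∈ Γ := Subgroup.subset_closure (Or.inl ⟨b, rfl⟩)
  have hL (b : F) : L b ∈ Γ := Subgroup.subset_closure (Or.inr ⟨b, rfl⟩)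
  have hmem (g : SL(2, F)) (hg : g 1 0 ≠ 0) : g ∈ Γ := by
    rw [eq_transvection_mul_transvection_mul_transvection g hg]
    exact mul_mem (mul_mem (hU _) (hL _)) (hU _)
  refine eq_top_iff.2 fun g _ => ?_
  by_cases hg : g 1 0 = 0
  · have hg0 : g 0 0 ≠ 0 := by
      intro h
      have hdet := g.det_coe
      rw [det_fin_two, h, hg] at hdet
      simp at hdet
    have hLg : (L 1 * g : SL(2, F)) 1 0 ≠ 0 := by
      simpa [transvection_coe, mul_apply, Fin.sum_univ_two, single, hg] using hg0
    exact (Subgroup.mul_mem_cancel_left Γ (hL 1)).1 (hmem _ hLg)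
  · exact hmem g hg

theorem dense_of_dense_transvectionCoeffs [TopologicalSpace F] [IsTopologicalRing F]
    {Γ : Subgroup SL(2, F)}
    (hU : Dense (transvectionCoeffs Γ (zero_ne_one : (0 : Fin 2) ≠ 1) : Set F))
    (hL : Dense (transvectionCoeffs Γ (one_ne_zero : (1 : Fin 2) ≠ 0) : Set F)) :
    Dense (Γ : Set SL(2, F)) := by
  rw [dense_iff_closure_eq, ← Γ.topologicalClosure_coe, ← Subgroup.coe_top, SetLike.coe_set_eq,
    eq_top_iff, ← closure_range_transvection_union_range_transvection, Subgroup.closure_le]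
  rintro _ (⟨b, rfl⟩ | ⟨b, rfl⟩)
  exacts [transvection_mem_topologicalClosure _ hU b, transvection_mem_topologicalClosure _ hL b]

end FinTwo

end Matrix.SpecialLinearGroup

open Matrix.SpecialLinearGroup

section Hm

variable (m : ℕ) (hm : 2 ≤ m)

lemma Hm_le_GLPos : Hm m hm ≤ GLPos (Fin 2) ℝ := by
  rw [Hm, Subgroup.closure_le]
  rintro g (⟨A, rfl⟩ | rfl)
  · exact (toGLPos (map (Int.castRingHom ℝ) A)).2
  · simp [mem_glpos, diagm, Fin.prod_univ_two, det_diagonal, show 0 < m by omega]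

lemma mapGL_mem_Hm (A : SL(2, ℤ)) : mapGL ℝ A ∈ Hm m hm :=
  Subgroup.subset_closure (Or.inl ⟨A, by simp [mapGL]⟩)

lemma diagm_mem_Hm : diagm m hm ∈ Hm m hm :=
  Subgroup.subset_closure (Or.inr rfl)

lemma mapGL_transvection_one_mem_Hm {i j : Fin 2} (hij : i ≠ j) :
    mapGL ℝ (transvection hij (1 : ℝ)) ∈ Hm m hm := by
  simpa [mapGL, map_transvection] using mapGL_mem_Hm m hm (transvection hij 1)

lemma diagm_mul_transvection_zero_one (b : ℝ) :
    diagm m hm * mapGL ℝ (transvection zero_ne_one (b / m)) =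
      mapGL ℝ (transvection zero_ne_one b) * diagm m hm := by
  have hm0 : (m : ℝ) ≠ 0 := by positivity
  ext i j
  fin_cases i <;> fin_cases j <;>
    simp [diagm, transvection_coe, mul_apply, Fin.sum_univ_two, single, mul_div_cancel₀, hm0]

lemma transvection_one_zero_mul_diagm (b : ℝ) :
    mapGL ℝ (transvection one_ne_zero (b / m)) * diagm m hm =
      diagm m hm * mapGL ℝ (transvection one_ne_zero b) := by
  have hm0 : (m : ℝ) ≠ 0 := by positivity
  ext i j
  fin_cases i <;> fin_cases j <;>
    simp [diagm, transvection_coe, mul_apply, Fin.sum_univ_two, single, hm0]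

lemma dense_comap_mapGL_Hm :
    Dense (((Hm m hm).comap (mapGL ℝ) : Subgroup SL(2, ℝ)) : Set SL(2, ℝ)) := by
  have hm1 : (1 : ℝ) < m := by exact_mod_cast hm
  have hD := diagm_mem_Hm m hm
  apply dense_of_dense_transvectionCoeffs
  · refine AddSubgroup.dense_of_forall_div_mem _ hm1 one_pos
      (mapGL_transvection_one_mem_Hm m hm _) fun b hb => ?_
    show mapGL ℝ _ ∈ Hm m hm
    rw [eq_inv_mul_of_mul_eq (diagm_mul_transvection_zero_one m hm b)]
    exact mul_mem (inv_mem hD) (mul_mem hb hD)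
  · refine AddSubgroup.dense_of_forall_div_mem _ hm1 one_pos
      (mapGL_transvection_one_mem_Hm m hm _) fun b hb => ?_
    show mapGL ℝ _ ∈ Hm m hm
    rw [eq_mul_inv_of_mul_eq (transvection_one_zero_mul_diagm m hm b)]
    exact mul_mem (mul_mem hD hb) (inv_mem hD)

end Hm

/-- Let `m ≥ 2` be an integer and let `H_m` be the subgroup of `GL₂(ℝ)` generated by the image
of `SL₂(ℤ)` and the diagonal matrix `diag(m, 1)`.  Every element of `H_m` has positive
determinant, so `H_m` acts on the complex upper half-plane `ℍ` by fractional linear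
transformations.  For every `τ ∈ ℍ`, the orbit `H_m · τ` is dense in `ℍ`. -/
theorem Hm_orbit_dense_in_upperHalfPlane (m : ℕ) (hm : 2 ≤ m) :
    (∀ g : GL (Fin 2) ℝ, g ∈ Hm m hm → 0 < ((g : Matrix (Fin 2) (Fin 2) ℝ)).det) ∧
    ∀ τ : UpperHalfPlane,
      Dense {τ' : UpperHalfPlane | ∃ (g : GL (Fin 2) ℝ) (_ : g ∈ Hm m hm)
        (hg : g ∈ Matrix.GLPos (Fin 2) ℝ),
        (⟨g, hg⟩ : Matrix.GLPos (Fin 2) ℝ) • τ = τ'} := by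
  refine ⟨fun g hg => Hm_le_GLPos m hm hg, fun τ => ?_⟩
  refine (dense_orbit_of_dense_subgroup (dense_comap_mapGL_Hm m hm) τ).mono ?_
  rintro _ ⟨⟨g, hg⟩, rfl⟩
  exact ⟨mapGL ℝ g, hg, Hm_le_GLPos m hm hg, rfl⟩
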